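/- If a weighted directed graph G on N nodes is connected and the diagonal matrix B = diag(b_1,...,b_N) with b_i ≥ 0 has at least one strictly positive entry, then the matrix L + B, where L is the graph Laplacian of G, is positive definite. -/

import Mathlib

open Matrix

/-- If a weighted graph on `N` nodes (symmetric nonnegative adjacency matrix `A` with zero
diagonal) is connected, and `B = diagonal b` is a nonnegative diagonal matrix with at least one
strictly positive entry, then `L + B` is positive definite, where `L = D - A` is the graph
Laplacian. -/
theorem laplacian_add_diag_posDef {N : ℕ} (hN : 0 < N)
    (A : Matrix (Fin N) (Fin N) ℝ)
    (hsymm : ∀ i j, A i j = A j i)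
    (hnonneg : ∀ i j, 0 ≤ A i j)
    (hdiag : ∀ i, A i i = 0)
    (hconn : ∀ i j : Fin N, i ≠ j → ∃ (m : ℕ) (p : Fin (m + 1) → Fin N),
      p 0 = i ∧ p (Fin.last m) = j ∧ ∀ k : Fin m, 0 < A (p k.castSucc) (p k.succ))
    (b : Fin N → ℝ) (hb : ∀ i, 0 ≤ b i) (hb' : ∃ i, 0 < b i)
    (d : Fin N → ℝ) (hd : ∀ i, d i = ∑ j, A i j)
    (L : Matrix (Fin N) (Fin N) ℝ) (hL : L = Matrix.diagonal d - A) :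
    (L + Matrix.diagonal b).PosDef := by
  rw [posDef_iff_dotProduct_mulVec]
  constructor
  · -- Hermitian
    ext i j
    simp only [conjTranspose_apply, Matrix.add_apply, hL, Matrix.sub_apply, diagonal_apply, star_trivial]
    by_cases h : i = j
    · subst h; simp [hsymm]
    · simp [h, Ne.symm h, hsymm i j]
  · intro x hx
    have hQ : dotProduct (star x) ((L + Matrix.diagonal b) *ᵥ x)
        = ∑ i, d i * (x i)^2 + ∑ i, b i * (x i)^2 - ∑ i, ∑ j, A i j * x i * x j := by
      simp only [star_trivial, dotProduct, hL, add_mulVec, sub_mulVec, mulVec_diagonal,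
        Pi.add_apply, Pi.sub_apply, mulVec]
      rw [← Finset.sum_add_distrib, ← Finset.sum_sub_distrib]
      refine Finset.sum_congr rfl fun i _ => ?_
      simp only [Matrix.sub_apply, Matrix.add_apply, diagonal_apply]
      have hterm : ∀ j, x i * (((if i = j then d i else 0) - A i j
            + if i = j then b i else 0) * x j)
          = (if j = i then (d i + b i) * (x i)^2 else 0) - A i j * x i * x j := by
        intro j
        by_cases h : i = j
        · subst h; simp; ring
        · simp [h, Ne.symm h]; ring
      rw [Finset.mul_sum]
      rw [Finset.sum_congr rfl fun j _ => hterm j, Finset.sum_sub_distrib,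
        Finset.sum_ite_eq' Finset.univ i (fun _ => (d i + b i) * (x i)^2)]
      simp; ring
    have hid : ∑ i, ∑ j, A i j * (x i - x j)^2
        = 2 * ∑ i, d i * (x i)^2 - 2 * ∑ i, ∑ j, A i j * x i * x j := by
      have h1 : ∑ i, ∑ j, A i j * (x i)^2 = ∑ i, d i * (x i)^2 :=
        Finset.sum_congr rfl fun i _ => by rw [hd, Finset.sum_mul]
      have h2 : ∑ i, ∑ j : Fin N, A i j * (x j)^2 = ∑ i, d i * (x i)^2 := by
        rw [Finset.sum_comm]
        refine Finset.sum_congr rfl fun j _ => ?_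
        rw [hd, Finset.sum_mul]
        exact Finset.sum_congr rfl fun i _ => by rw [hsymm]
      calc ∑ i, ∑ j, A i j * (x i - x j)^2
          = ∑ i, (∑ j, A i j * (x i)^2 + ∑ j, A i j * (x j)^2
              - ∑ j, 2 * (A i j * x i * x j)) := by
            refine Finset.sum_congr rfl fun i _ => ?_
            rw [← Finset.sum_add_distrib, ← Finset.sum_sub_distrib]
            exact Finset.sum_congr rfl fun j _ => by ring
        _ = 2 * ∑ i, d i * (x i)^2 - 2 * ∑ i, ∑ j, A i j * x i * x j := by
            rw [Finset.sum_sub_distrib, Finset.sum_add_distrib, h1, h2]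
            have h3 : ∑ i, ∑ j, 2 * (A i j * x i * x j)
                = 2 * ∑ i, ∑ j, A i j * x i * x j := by
              simp_rw [Finset.mul_sum]
            rw [h3]; ring
    set S := ∑ i, ∑ j, A i j * (x i - x j)^2 with hS
    set T := ∑ i, b i * (x i)^2 with hT
    have hkey : dotProduct (star x) ((L + Matrix.diagonal b) *ᵥ x) = (1/2) * S + T := by
      rw [hQ, hid]; ring
    rw [hkey]
    have hSnn : 0 ≤ S := Finset.sum_nonneg fun i _ => Finset.sum_nonneg fun j _ =>
      mul_nonneg (hnonneg i j) (sq_nonneg _)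
    have hTnn : 0 ≤ T := Finset.sum_nonneg fun i _ => mul_nonneg (hb i) (sq_nonneg _)
    rcases lt_or_eq_of_le hTnn with hTpos | hT0
    · linarith
    rcases lt_or_eq_of_le hSnn with hSpos | hS0
    · linarith
    -- both zero: derive contradiction with x ≠ 0
    exfalso
    apply hx
    have hTterm : ∀ i, b i * (x i)^2 = 0 := by
      intro i
      have := (Finset.sum_eq_zero_iff_of_nonneg
        (fun i _ => mul_nonneg (hb i) (sq_nonneg (x i)))).mp hT0.symm
      exact this i (Finset.mem_univ i)
    have hSterm : ∀ i j, A i j * (x i - x j)^2 = 0 := by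
      intro i j
      have houter := (Finset.sum_eq_zero_iff_of_nonneg
        (fun i _ => Finset.sum_nonneg fun j _ =>
          mul_nonneg (hnonneg i j) (sq_nonneg _))).mp hS0.symm i (Finset.mem_univ i)
      exact (Finset.sum_eq_zero_iff_of_nonneg
        (fun j _ => mul_nonneg (hnonneg i j) (sq_nonneg _))).mp houter j (Finset.mem_univ j)
    have hedge : ∀ i j, 0 < A i j → x i = x j := by
      intro i j hA
      have := hSterm i j
      rcases mul_eq_zero.mp this with h | h
      · exact absurd h (ne_of_gt hA)
      · have := pow_eq_zero_iff (n := 2) (by norm_num) |>.mp h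
        linarith [sub_eq_zero.mp this]
    obtain ⟨i0, hi0⟩ := hb'
    have hxi0 : x i0 = 0 := by
      have := hTterm i0
      rcases mul_eq_zero.mp this with h | h
      · exact absurd h (ne_of_gt hi0)
      · exact pow_eq_zero_iff (n := 2) (by norm_num) |>.mp h
    funext j
    by_cases hji : j = i0
    · rw [hji, hxi0]; rfl
    obtain ⟨m, p, hp0, hplast, hpos⟩ := hconn i0 j (Ne.symm hji)
    have hall : ∀ k : Fin (m + 1), x (p k) = x (p 0) := by
      intro k
      induction k using Fin.induction with
      | zero => rfl
      | succ k ih =>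
        rw [← hedge _ _ (hpos k)]
        exact ih
    have := hall (Fin.last m)
    rw [hplast, hp0, hxi0] at this
    simpa using this
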